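/- arXiv:1407.5605 — 2 statements merged into one kernel-verified Lean document; each statement's English description precedes it below -/
import Mathlib

section
/- Let μ and ν be finite signed measures on R^d \ {0} with total mass zero, such that the integrals of log|z-w| against μ × ν and against (φ_*μ) × (φ_*ν) are well-defined and finite, where φ(z) = z/|z|². Then ∫∫ log|z - w| dμ(z) dν(w) = ∫∫ log|φ(z) - φ(w)| dμ(z) dν(w). -/
open MeasureTheory

/-- The punctured Euclidean space `ℝ^d \ {0}`. -/
abbrev Punctured (d : ℕ) : Type := {x : EuclideanSpace ℝ (Fin d) // x ≠ 0}

/-- The inversion map `φ(z) = z / |z|²` on `ℝ^d \ {0}`. -/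
noncomputable def inversion {d : ℕ} (z : Punctured d) : Punctured d :=
  ⟨(‖z.1‖ ^ 2)⁻¹ • z.1,
    smul_ne_zero (inv_ne_zero (pow_ne_zero 2 (norm_ne_zero_iff.mpr z.2))) z.2⟩

/-- The positive (`true`) and negative (`false`) parts of the Jordan
decomposition of a signed measure. -/
noncomputable def part {α : Type*} [MeasurableSpace α] (μ : MeasureTheory.SignedMeasure α)
    (b : Bool) : Measure α :=
  if b then μ.toJordanDecomposition.posPart else μ.toJordanDecomposition.negPart

instance {α : Type*} [MeasurableSpace α] (μ : MeasureTheory.SignedMeasure α) (b : Bool) :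
    IsFiniteMeasure (part μ b) := by
  unfold part; cases b <;> simp <;> infer_instance

/-- The sign `±1` attached to each part. -/
def sgn (b : Bool) : ℝ := if b then 1 else -1

/-- The double integral `∫∫ K(z,w) dμ(z) dν(w)` of a kernel against a pair of
signed measures, expressed through Jordan decompositions. -/
noncomputable def doubleInt {α : Type*} [MeasurableSpace α]
    (μ ν : MeasureTheory.SignedMeasure α) (K : α → α → ℝ) : ℝ :=
  ∑ b₁ : Bool, ∑ b₂ : Bool,
    sgn b₁ * sgn b₂ * ∫ p, K p.1 p.2 ∂((part μ b₁).prod (part ν b₂))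

/-! Off the diagonal, `log ‖φ z - φ w‖ = log ‖z - w‖ - log ‖z‖ - log ‖w‖`. Each correction term
depends on one variable only, so its double integral factors through the total mass of the other
signed measure, which is zero. -/

lemma norm_inversion_sub_inversion {d : ℕ} (z w : Punctured d) :
    ‖(inversion z).1 - (inversion w).1‖ = ‖z.1 - w.1‖ / (‖z.1‖ * ‖w.1‖) := by
  have h := dist_div_norm_sq_smul z.2 w.2 1
  simp only [one_div, inv_pow, one_pow, dist_eq_norm] at h
  rw [inversion, inversion, h, inv_mul_eq_div]

lemma log_norm_inversion_sub_inversion {d : ℕ} {z w : Punctured d} (hzw : z ≠ w) :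
    Real.log ‖(inversion z).1 - (inversion w).1‖
      = Real.log ‖z.1 - w.1‖ - Real.log ‖z.1‖ - Real.log ‖w.1‖ := by
  have hz : ‖z.1‖ ≠ 0 := norm_ne_zero_iff.mpr z.2
  have hw : ‖w.1‖ ≠ 0 := norm_ne_zero_iff.mpr w.2
  have hzw' : ‖z.1 - w.1‖ ≠ 0 :=
    norm_ne_zero_iff.mpr (sub_ne_zero.mpr (Subtype.coe_ne_coe.mpr hzw))
  rw [norm_inversion_sub_inversion, Real.log_div hzw' (mul_ne_zero hz hw), Real.log_mul hz hw]
  ring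

section doubleInt

variable {α : Type*} [MeasurableSpace α] {μ ν : SignedMeasure α}

lemma sum_sgn_mul_part_real (σ : SignedMeasure α) {s : Set α} (hs : MeasurableSet s) :
    ∑ b, sgn b * (part σ b).real s = σ s := by
  conv_rhs => rw [← σ.toSignedMeasure_toJordanDecomposition]
  rw [JordanDecomposition.toSignedMeasure, Measure.toSignedMeasure_sub_apply hs]
  simp [part, sgn, sub_eq_add_neg]

lemma doubleInt_congr_ae {K L : α → α → ℝ}
    (h : ∀ b₁ b₂, ∀ᵐ p ∂(part μ b₁).prod (part ν b₂), K p.1 p.2 = L p.1 p.2) :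
    doubleInt μ ν K = doubleInt μ ν L := by
  simp only [doubleInt, integral_congr_ae (h _ _)]

lemma doubleInt_sub {K L : α → α → ℝ}
    (hK : ∀ b₁ b₂, Integrable (fun p : α × α => K p.1 p.2) ((part μ b₁).prod (part ν b₂)))
    (hL : ∀ b₁ b₂, Integrable (fun p : α × α => L p.1 p.2) ((part μ b₁).prod (part ν b₂))) :
    doubleInt μ ν (fun z w => K z w - L z w) = doubleInt μ ν K - doubleInt μ ν L := by
  simp only [doubleInt, integral_sub (hK _ _) (hL _ _), mul_sub, Finset.sum_sub_distrib]

lemma doubleInt_fst_of_univ_eq_zero (hν : ν Set.univ = 0) (f : α → ℝ) :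
    doubleInt μ ν (fun z _ => f z) = 0 := by
  simp only [doubleInt, integral_fun_fst, smul_eq_mul]
  calc ∑ b₁, ∑ b₂, sgn b₁ * sgn b₂ * ((part ν b₂).real Set.univ * ∫ x, f x ∂part μ b₁)
      = (∑ b₁, sgn b₁ * ∫ x, f x ∂part μ b₁) * ∑ b₂, sgn b₂ * (part ν b₂).real Set.univ := by
        rw [Finset.sum_mul_sum]
        exact Finset.sum_congr rfl fun _ _ => Finset.sum_congr rfl fun _ _ => by ring
    _ = 0 := by rw [sum_sgn_mul_part_real ν MeasurableSet.univ, hν, mul_zero]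

lemma doubleInt_snd_of_univ_eq_zero (hμ : μ Set.univ = 0) (f : α → ℝ) :
    doubleInt μ ν (fun _ w => f w) = 0 := by
  simp only [doubleInt, integral_fun_snd, smul_eq_mul]
  calc ∑ b₁, ∑ b₂, sgn b₁ * sgn b₂ * ((part μ b₁).real Set.univ * ∫ y, f y ∂part ν b₂)
      = (∑ b₁, sgn b₁ * (part μ b₁).real Set.univ) * ∑ b₂, sgn b₂ * ∫ y, f y ∂part ν b₂ := by
        rw [Finset.sum_mul_sum]
        exact Finset.sum_congr rfl fun _ _ => Finset.sum_congr rfl fun _ _ => by ring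
    _ = 0 := by rw [sum_sgn_mul_part_real μ MeasurableSet.univ, hμ, zero_mul]

end doubleInt

theorem log_kernel_inversion_invariance_general (d : ℕ)
    (μ ν : MeasureTheory.SignedMeasure (Punctured d))
    (hμ : μ Set.univ = 0) (hν : ν Set.univ = 0)
    (hK : ∀ b₁ b₂ : Bool,
      Integrable (fun p : Punctured d × Punctured d => Real.log ‖p.1.1 - p.2.1‖)
        ((part μ b₁).prod (part ν b₂)))
    (hz : ∀ b₁ b₂ : Bool,
      Integrable (fun p : Punctured d × Punctured d => Real.log ‖p.1.1‖)
        ((part μ b₁).prod (part ν b₂)))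
    (hw : ∀ b₁ b₂ : Bool,
      Integrable (fun p : Punctured d × Punctured d => Real.log ‖p.2.1‖)
        ((part μ b₁).prod (part ν b₂)))
    (hdiag : ∀ b₁ b₂ : Bool,
      ((part μ b₁).prod (part ν b₂)) {p : Punctured d × Punctured d | p.1 = p.2} = 0) :
    doubleInt μ ν (fun z w => Real.log ‖z.1 - w.1‖)
      = doubleInt μ ν (fun z w => Real.log ‖(inversion z).1 - (inversion w).1‖) := by
  have off_diag : doubleInt μ ν (fun z w => Real.log ‖(inversion z).1 - (inversion w).1‖)
      = doubleInt μ ν (fun z w => Real.log ‖z.1 - w.1‖ - Real.log ‖z.1‖ - Real.log ‖w.1‖) :=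
    doubleInt_congr_ae fun b₁ b₂ =>
      (measure_eq_zero_iff_ae_notMem.mp (hdiag b₁ b₂)).mono
        fun _ hp => log_norm_inversion_sub_inversion hp
  rw [off_diag, doubleInt_sub (fun b₁ b₂ => (hK b₁ b₂).sub (hz b₁ b₂)) hw, doubleInt_sub hK hz,
    doubleInt_fst_of_univ_eq_zero hν, doubleInt_snd_of_univ_eq_zero hμ]
  ring

/-- for finite signed measures `μ, ν` on `ℝ^d \ {0}` with total mass
zero, such that all the relevant double log-integrals are absolutely convergent
(and give no mass to the diagonal, so that the integrals are well-defined),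
`∫∫ log|z - w| dμ(z) dν(w) = ∫∫ log|φ(z) - φ(w)| dμ(z) dν(w)` where
`φ(z) = z/|z|²` is the inversion. -/
theorem log_kernel_inversion_invariance (d : ℕ) (hd : 1 ≤ d)
    (μ ν : MeasureTheory.SignedMeasure (Punctured d))
    (hμ : μ Set.univ = 0) (hν : ν Set.univ = 0)
    (hK : ∀ b₁ b₂ : Bool,
      Integrable (fun p : Punctured d × Punctured d => Real.log ‖p.1.1 - p.2.1‖)
        ((part μ b₁).prod (part ν b₂)))
    (hKφ : ∀ b₁ b₂ : Bool,
      Integrable (fun p : Punctured d × Punctured d =>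
          Real.log ‖(inversion p.1).1 - (inversion p.2).1‖)
        ((part μ b₁).prod (part ν b₂)))
    (hz : ∀ b₁ b₂ : Bool,
      Integrable (fun p : Punctured d × Punctured d => Real.log ‖p.1.1‖)
        ((part μ b₁).prod (part ν b₂)))
    (hw : ∀ b₁ b₂ : Bool,
      Integrable (fun p : Punctured d × Punctured d => Real.log ‖p.2.1‖)
        ((part μ b₁).prod (part ν b₂)))
    (hdiag : ∀ b₁ b₂ : Bool,
      ((part μ b₁).prod (part ν b₂)) {p : Punctured d × Punctured d | p.1 = p.2} = 0) :
    doubleInt μ ν (fun z w => Real.log ‖z.1 - w.1‖)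
      = doubleInt μ ν (fun z w => Real.log ‖(inversion z).1 - (inversion w).1‖) :=
  log_kernel_inversion_invariance_general d μ ν hμ hν hK hz hw hdiag
end

section
/- Let d ≥ 2 be even and let k be an integer. If k is even and 2 - d ≤ k ≤ d - 2, then Δ^{d/2} applied to g(x) = |x|^k vanishes on R^d \ {0}. -/
/-!
Write `‖x‖^k = (‖x‖²)^m` with `k = 2m`. On `ℝⁿ \ {0}` one has
`Δ (‖x‖²)^m = 2m (2m + n - 2) (‖x‖²)^(m-1)`, hence
`Δ^j (‖x‖²)^m = ∏_{i<j} 2(m-i)(2(m-i) + n - 2) · (‖x‖²)^(m-j)`.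
For `n = 2t` and `1 - t ≤ m ≤ t - 1` one of the first `t` factors vanishes:
the one with `i = m` if `m ≥ 0`, the one with `i = m + t - 1` if `m < 0`.
-/

open scoped BigOperators

/-- The Laplacian on `ℝ^d`, as an operator on functions. -/
noncomputable def laplacian {d : ℕ} (f : EuclideanSpace ℝ (Fin d) → ℝ) :
    EuclideanSpace ℝ (Fin d) → ℝ := fun x =>
  ∑ i : Fin d, iteratedFDeriv ℝ 2 f x ![EuclideanSpace.single i (1 : ℝ),
    EuclideanSpace.single i (1 : ℝ)]

open Topology Finset InnerProductSpace Module
open scoped Laplacian RealInnerProductSpace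

section NormSqZpow

variable {E : Type*} [NormedAddCommGroup E] [InnerProductSpace ℝ E] {x : E}

theorem hasFDerivAt_norm_sq_zpow (m : ℤ) (hx : x ≠ 0) :
    HasFDerivAt (fun y : E => (‖y‖ ^ 2) ^ m)
      ((2 * m * (‖x‖ ^ 2) ^ (m - 1)) • innerSL ℝ x) x := by
  refine ((hasDerivAt_zpow m _ (Or.inl (by positivity))).comp_hasFDerivAt x
    (hasStrictFDerivAt_norm_sq x).hasFDerivAt).congr_fderiv ?_
  ext v
  simp only [smul_apply, coe_innerSL_apply, nsmul_eq_mul, Nat.cast_ofNat, smul_eq_mul]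
  ring

theorem fderiv_norm_sq_zpow_eventuallyEq (m : ℤ) (hx : x ≠ 0) :
    fderiv ℝ (fun y : E => (‖y‖ ^ 2) ^ m) =ᶠ[𝓝 x]
      fun y => (2 * m * (‖y‖ ^ 2) ^ (m - 1)) • innerSL ℝ y := by
  filter_upwards [isOpen_compl_singleton.mem_nhds hx] with y hy
  exact (hasFDerivAt_norm_sq_zpow m hy).fderiv

theorem fderiv_fderiv_norm_sq_zpow_apply (m : ℤ) (hx : x ≠ 0) (v w : E) :
    fderiv ℝ (fderiv ℝ (fun y : E => (‖y‖ ^ 2) ^ m)) x v w =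
      2 * m * (‖x‖ ^ 2) ^ (m - 1) * ⟪v, w⟫
        + 4 * m * (m - 1) * (‖x‖ ^ 2) ^ (m - 2) * ⟪x, v⟫ * ⟪x, w⟫ := by
  have hΦ : HasFDerivAt (fun y => (2 * m * (‖y‖ ^ 2) ^ (m - 1)) • innerSL ℝ y) _ x :=
    ((hasFDerivAt_norm_sq_zpow (m - 1) hx).const_mul (2 * m)).smul
      (innerSL ℝ (E := E)).hasFDerivAt
  rw [(fderiv_norm_sq_zpow_eventuallyEq m hx).fderiv_eq, hΦ.fderiv]
  simp only [add_apply, smul_apply, ContinuousLinearMap.smulRight_apply, coe_innerSL_apply,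
    smul_eq_mul]
  rw [innerSL_apply_apply, show m - 1 - 1 = m - 2 by ring]
  push_cast
  ring

theorem contDiffAt_norm_sq_zpow {n : WithTop ℕ∞} (m : ℤ) (hx : x ≠ 0) :
    ContDiffAt ℝ n (fun y : E => (‖y‖ ^ 2) ^ m) x := by
  have h := (contDiff_norm_sq ℝ (n := n)).contDiffAt (x := x)
  obtain ⟨k, rfl | rfl⟩ := m.eq_nat_or_neg
  · simpa using h.pow k
  · simp only [zpow_neg, zpow_natCast]
    exact (h.pow k).inv (by positivity)

variable [FiniteDimensional ℝ E]

theorem laplacian_norm_sq_zpow (m : ℤ) (hx : x ≠ 0) :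
    Δ (fun y : E => (‖y‖ ^ 2) ^ m) x =
      2 * m * (2 * m + finrank ℝ E - 2) * (‖x‖ ^ 2) ^ (m - 1) := by
  set b := stdOrthonormalBasis ℝ E
  have hsum : ∑ i, ⟪x, b i⟫ * ⟪x, b i⟫ = ‖x‖ ^ 2 := by
    simpa [real_inner_comm] using b.sum_inner_mul_inner x x
  simp only [laplacian_eq_iteratedFDeriv_orthonormalBasis _ b, iteratedFDeriv_two_apply,
    Matrix.cons_val_zero, Matrix.cons_val_one, fderiv_fderiv_norm_sq_zpow_apply m hx,
    real_inner_self_eq_norm_sq, b.norm_eq_one, sum_add_distrib, mul_assoc, ← mul_sum, hsum]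
  have hpow : (‖x‖ ^ 2) ^ (m - 2) * ‖x‖ ^ 2 = (‖x‖ ^ 2) ^ (m - 1) := by
    rw [← zpow_add_one₀ (by positivity)]
    ring_nf
  simp only [one_pow, sum_const, card_univ, Fintype.card_fin, nsmul_eq_mul, mul_one, hpow]
  ring

theorem iterate_laplacian_norm_sq_zpow (m : ℤ) (j : ℕ) (hx : x ≠ 0) :
    Δ^[j] (fun y : E => (‖y‖ ^ 2) ^ m) x =
      (∏ i ∈ range j, 2 * (m - i) * (2 * (m - i) + finrank ℝ E - 2) : ℤ) *
        (‖x‖ ^ 2) ^ (m - j) := by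
  induction j generalizing x with
  | zero => simp
  | succ j ih =>
    set c : ℝ :=
      ((∏ i ∈ range j, 2 * (m - i) * (2 * (m - i) + finrank ℝ E - 2) : ℤ) : ℝ) with hc
    have hnear : Δ^[j] (fun y : E => (‖y‖ ^ 2) ^ m) =ᶠ[𝓝 x]
        c • fun y : E => (‖y‖ ^ 2) ^ (m - j) := by
      filter_upwards [isOpen_compl_singleton.mem_nhds hx] with y hy
      exact ih hy
    rw [Function.iterate_succ_apply', (laplacian_congr_nhds hnear).eq_of_nhds,
      laplacian_smul c (contDiffAt_norm_sq_zpow _ hx), smul_eq_mul,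
      laplacian_norm_sq_zpow _ hx, prod_range_succ, Int.cast_mul, ← hc, Nat.cast_succ,
      ← sub_sub]
    push_cast
    ring

end NormSqZpow

theorem prod_range_half_eq_zero {n : ℕ} (hn : Even n) {m : ℤ} (hm₁ : 2 - (n : ℤ) ≤ 2 * m)
    (hm₂ : 2 * m ≤ n - 2) :
    ∏ i ∈ range (n / 2), 2 * (m - i) * (2 * (m - i) + n - 2) = 0 := by
  obtain ⟨t, rfl⟩ := hn
  rw [prod_eq_zero_iff]
  rcases le_or_gt 0 m with hm | hm
  · exact ⟨m.toNat, mem_range.2 (by omega), by simp [Int.toNat_of_nonneg hm]⟩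
  · refine ⟨(m + t - 1).toNat, mem_range.2 (by omega), ?_⟩
    rw [Int.toNat_of_nonneg (by omega)]
    push_cast
    ring

theorem laplacian_eq_Laplacian_laplacian {d : ℕ} :
    (laplacian : (EuclideanSpace ℝ (Fin d) → ℝ) → EuclideanSpace ℝ (Fin d) → ℝ) =
      Δ := by
  funext f
  rw [laplacian_eq_iteratedFDeriv_orthonormalBasis f (EuclideanSpace.basisFun (Fin d) ℝ)]
  simp only [EuclideanSpace.basisFun_apply]
  rfl

theorem iterated_laplacian_norm_zpow_eq_zero_general (d : ℕ) (hdeven : Even d)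
    (k : ℤ) (hk : Even k) (hk1 : 2 - (d : ℤ) ≤ k) (hk2 : k ≤ (d : ℤ) - 2)
    (x : EuclideanSpace ℝ (Fin d)) (hx : x ≠ 0) :
    (laplacian)^[d / 2] (fun y => ‖y‖ ^ k) x = 0 := by
  obtain ⟨m, rfl⟩ := hk
  have hg : (fun y : EuclideanSpace ℝ (Fin d) => ‖y‖ ^ (m + m)) =
      fun y => (‖y‖ ^ 2) ^ m := by
    funext y
    rw [← two_mul, zpow_mul]
    norm_cast
  rw [laplacian_eq_Laplacian_laplacian, hg, iterate_laplacian_norm_sq_zpow m _ hx,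
    finrank_euclideanSpace_fin, prod_range_half_eq_zero hdeven (by omega) (by omega)]
  simp

/-- Let `d ≥ 2` be even and `k` an integer.  If `k` is even and
`2 - d ≤ k ≤ d - 2`, then `Δ^(d/2)` applied to `g(x) = |x|^k` vanishes on
`ℝ^d \ {0}`. -/
theorem iterated_laplacian_norm_zpow_eq_zero (d : ℕ) (hd : 2 ≤ d) (hdeven : Even d)
    (k : ℤ) (hk : Even k) (hk1 : 2 - (d : ℤ) ≤ k) (hk2 : k ≤ (d : ℤ) - 2)
    (x : EuclideanSpace ℝ (Fin d)) (hx : x ≠ 0) :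
    (laplacian)^[d / 2] (fun y => ‖y‖ ^ k) x = 0 :=
  iterated_laplacian_norm_zpow_eq_zero_general d hdeven k hk hk1 hk2 x hx
end
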